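/- Let q ∈ ℂ with |q| = 1 and q^{2k} ≠ 1 for 1 ≤ k ≤ ℓ. Then the projector ~P^{(ℓ)} = Σ_{n=0}^{ℓ} ~||ℓ,n⟩⟨ℓ,n|| on (ℂ²)^{⊗ℓ} is Hermitian: (~P^{(ℓ)})† = ~P^{(ℓ)}, with respect to the Hermitian inner product in which the basis vectors v_S are orthonormal. -/

import Mathlib

open Matrix Complex Finset Filter

noncomputable section

/-- q-integer `[n]_q = (q^n - q^{-n})/(q - q⁻¹)`. -/
def qint (q : ℂ) (n : ℕ) : ℂ := (q ^ n - q⁻¹ ^ n) / (q - q⁻¹)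

/-- q-factorial `[n]_q!`. -/
def qfact (q : ℂ) (n : ℕ) : ℂ := ∏ k ∈ Finset.range n, qint q (k + 1)

/-- q-binomial coefficient `[m ¦ n]_q`. -/
def qbinom (q : ℂ) (m n : ℕ) : ℂ := qfact q m / (qfact q (m - n) * qfact q n)

/-- The set of positions where the configuration `c` equals `1`. -/
def oneSet {m : ℕ} (c : Fin m → Fin 2) : Finset (Fin m) :=
  Finset.univ.filter fun i => c i = 1

/-- The exponent `Σ(S) − n m + n(n−1)/2` (positions counted `1,…,m`). -/
def expKet (m n : ℕ) (S : Finset (Fin m)) : ℤ :=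
  (∑ i ∈ S, ((i : ℤ) + 1)) - (n : ℤ) * (m : ℤ) + ((n * (n - 1) / 2 : ℕ) : ℤ)

/-- Coefficients of the ket `||m, n⟩` in the standard basis. -/
def ketCoef (q : ℂ) (m n : ℕ) (c : Fin m → Fin 2) : ℂ :=
  if (oneSet c).card = n then q ^ expKet m n (oneSet c) else 0

/-- Coefficients of the bra `⟨m, n||` in the standard (bilinear) dual basis. -/
def braCoef (q : ℂ) (m n : ℕ) (c : Fin m → Fin 2) : ℂ :=
  (qbinom q m n)⁻¹ * q ^ ((n : ℤ) * ((m : ℤ) - (n : ℤ))) * ketCoef q m n c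

/-- Coefficients of the tilde bra `~⟨m, n||`. -/
def tbraCoef (q : ℂ) (m n : ℕ) (c : Fin m → Fin 2) : ℂ :=
  ((m.choose n : ℂ))⁻¹ *
    (if (oneSet c).card = n then q ^ (-(expKet m n (oneSet c))) else 0)

/-- Coefficients of the tilde ket `~||m, n⟩`. -/
def tketCoef (q : ℂ) (m n : ℕ) (c : Fin m → Fin 2) : ℂ :=
  qbinom q m n * q ^ (-((n : ℤ) * ((m : ℤ) - (n : ℤ)))) * ((m.choose n : ℂ))⁻¹ *
    (if (oneSet c).card = n then q ^ (-(expKet m n (oneSet c))) else 0)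

/-- The projector `P^{(m)} = Σ_{n=0}^{m} ||m,n⟩⟨m,n||` on `(ℂ²)^{⊗m}`. -/
def PlocM (q : ℂ) (m : ℕ) : Matrix (Fin m → Fin 2) (Fin m → Fin 2) ℂ :=
  Matrix.of fun a b => ∑ n ∈ Finset.range (m + 1), ketCoef q m n a * braCoef q m n b

/-- The projector `~P^{(m)} = Σ_{n=0}^{m} ~||m,n⟩⟨m,n||` on `(ℂ²)^{⊗m}`. -/
def tPlocM (q : ℂ) (m : ℕ) : Matrix (Fin m → Fin 2) (Fin m → Fin 2) ℂ :=
  Matrix.of fun a b => ∑ n ∈ Finset.range (m + 1), tketCoef q m n a * braCoef q m n b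


open ComplexConjugate

/-! On the unit circle `conj q = q⁻¹`, so conjugation inverts every power of `q`. The q-integers
`[n]_q = (qⁿ - q⁻ⁿ)/(q - q⁻¹)` are then real, hence so are the q-binomials, and conjugating the
`n`-th rank-one term `~||m,n⟩⟨m,n||` at `(a, b)` turns its `q`-exponents into those of the term at
`(b, a)`. -/

section UnitCircle

variable {q : ℂ} (hq : ‖q‖ = 1)
include hq

theorem conj_zpow_of_norm_eq_one (z : ℤ) : conj (q ^ z) = q ^ (-z) := by
  rw [map_zpow₀, ← inv_eq_conj hq, _root_.inv_zpow, _root_.zpow_neg]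

theorem conj_qint_of_norm_eq_one (n : ℕ) : conj (qint q n) = qint q n := by
  have hconj_inv : conj q⁻¹ = q := by rw [map_inv₀, ← inv_eq_conj hq, inv_inv]
  simp only [qint, map_div₀, map_sub, map_pow, ← inv_eq_conj hq, hconj_inv]
  rw [← neg_sub (q ^ n), ← neg_sub q, neg_div_neg_eq]

theorem conj_qfact_of_norm_eq_one (n : ℕ) : conj (qfact q n) = qfact q n := by
  simp only [qfact, map_prod, conj_qint_of_norm_eq_one hq]

theorem conj_qbinom_of_norm_eq_one (m n : ℕ) : conj (qbinom q m n) = qbinom q m n := by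
  simp only [qbinom, map_div₀, map_mul, conj_qfact_of_norm_eq_one hq]

theorem star_tketCoef_mul_braCoef_of_norm_eq_one (m n : ℕ) (a b : Fin m → Fin 2) :
    star (tketCoef q m n a * braCoef q m n b) = tketCoef q m n b * braCoef q m n a := by
  simp only [tketCoef, braCoef, ketCoef, star_def, map_mul, map_inv₀, map_natCast,
    conj_qbinom_of_norm_eq_one hq, conj_zpow_of_norm_eq_one hq]
  split_ifs <;> simp only [map_zero, mul_zero, zero_mul, conj_zpow_of_norm_eq_one hq, neg_neg]
  ring

end UnitCircle

theorem statement13_general (q : ℂ) (habs : ‖q‖ = 1) (m : ℕ) :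
    (tPlocM q m)ᴴ = tPlocM q m := by
  ext a b
  simp only [conjTranspose_apply, tPlocM, of_apply, star_sum,
    star_tketCoef_mul_braCoef_of_norm_eq_one habs]

/-- In the massless regime (`|q| = 1`), the projector `~P^{(m)}` is Hermitian. -/
theorem statement13 (q : ℂ) (habs : ‖q‖ = 1) (m : ℕ)
    (hq : ∀ k : ℕ, 1 ≤ k → k ≤ m → q ^ (2 * k) ≠ 1) :
    (tPlocM q m)ᴴ = tPlocM q m :=
  statement13_general q habs m
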